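/- arXiv:1207.4871 — 2 statements merged into one kernel-verified Lean document; each statement's English description precedes it below -/
import Mathlib

section
/- Let D be a fixed deduction system and S a constraint system. If a ground substitution σ with dom(σ) = vars(S) is a solution of S, then there exist a derivation D and a mapping α such that D is a proof of σ ⊨ S (i.e., D,σ,α ⊢ S). -/
/-! ### Terms -/

/-- First-order terms: variables, ordinary constants, nonces (an infinite
subset of the constants), and function applications. -/
inductive Term : Type
  | var : ℕ → Term
  | cst : ℕ → Term
  | nonce : ℕ → Term
  | func : ℕ → List Term → Term

namespace Term

/-- The subterm relation. -/
inductive IsSubterm : Term → Term → Prop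
  | refl (t : Term) : IsSubterm t t
  | func {s t : Term} {f : ℕ} {args : List Term} :
      t ∈ args → IsSubterm s t → IsSubterm s (func f args)

/-- The set of subterms of a term. -/
def sub (t : Term) : Set Term := {s | IsSubterm s t}

/-- The set of (indices of) variables of a term. -/
def varsSet (t : Term) : Set ℕ := {x | IsSubterm (var x) t}

/-- A term is ground if it has no variables. -/
def Ground (t : Term) : Prop := varsSet t = ∅

/-- The term is a variable. -/
def IsVar : Term → Prop
  | var _ => True
  | _ => False

/-- Application of a substitution to a term. -/
noncomputable def subst (σ : ℕ → Term) : Term → Term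
  | var x => σ x
  | cst c => cst c
  | nonce n => nonce n
  | func f args => func f (args.attach.map (fun a => Term.subst σ a.1))
decreasing_by
  have := List.sizeOf_lt_of_mem a.2
  simp only [Term.func.sizeOf_spec]
  omega

/-- The function symbol `f` occurs in the term `t`. -/
def OccursFun (f : ℕ) (t : Term) : Prop := ∃ args, IsSubterm (func f args) t

end Term

/-! ### Substitutions -/

/-- Substitutions (maps from variables to terms). -/
abbrev Subst := ℕ → Term

namespace Subst

/-- The domain of a substitution. -/
def dom (σ : Subst) : Set ℕ := {x | σ x ≠ .var x}

/-- The image of a substitution. -/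
def img (σ : Subst) : Set Term := {t | ∃ x ∈ dom σ, σ x = t}

/-- Idempotency of a substitution. -/
def Idem (σ : Subst) : Prop := ∀ x, (σ x).subst σ = σ x

/-- A substitution is ground if its image consists of ground terms. -/
def IsGround (σ : Subst) : Prop := ∀ x ∈ dom σ, (σ x).Ground

open Classical in
/-- Union of two substitutions (intended for disjoint domains). -/
noncomputable def union (σ τ : Subst) : Subst := fun x =>
  if σ x = Term.var x then τ x else σ x

end Subst

/-- Subterms of a set of terms. -/
def subT (T : Set Term) : Set Term := {s | ∃ t ∈ T, Term.IsSubterm s t}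

/-- Variables of a set of terms. -/
def varsT (T : Set Term) : Set ℕ := {x | ∃ t ∈ T, Term.IsSubterm (.var x) t}

/-- DAG size of a set of terms: number of its subterms. -/
noncomputable def sizeT (T : Set Term) : ℕ := (subT T).ncard

/-- Size of a substitution: DAG size of its image. -/
noncomputable def sizeSubst (σ : Subst) : ℕ := sizeT σ.img

/-! ### Deduction systems, steps and derivations -/

/-- A deduction system: a finite set of (standard) deduction rules, each rule
being a pair (left-hand sides, right-hand side) whose right-hand-side variables
occur in the left-hand sides.  Nonce-creation rules and reception rules are
built into the notions of steps/derivations below. -/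
structure DeductionSystem where
  rules : Set (List Term × Term)
  finite : rules.Finite
  wf : ∀ p ∈ rules, p.2.varsSet ⊆ varsT {u | u ∈ p.1}

/-- A step of a derivation: a reception `? → t` or a standard deduction `l → r`
(nonce creations are standard deductions with empty left-hand side). -/
inductive Step
  | recv : Term → Step
  | std : List Term → Term → Step

namespace Step

/-- Right-hand side of a step. -/
def rhs : Step → Term
  | recv t => t
  | std _ r => r

/-- All terms occurring in the step. -/
def terms : Step → Set Term
  | recv t => {t}
  | std l r => {r} ∪ {u | u ∈ l}

end Step

/-- The set of right-hand sides of the first `k` steps of `D`. -/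
def RHSset (D : List Step) (k : ℕ) : Set Term :=
  {r | ∃ j < k, ∃ s, D[j]? = some s ∧ s.rhs = r}

/-- A step is a deduction of the system `DS`: a reception of a ground term, a
nonce creation, or a ground instance of a (standard) rule of `DS`. -/
def IsDeduction (DS : DeductionSystem) (s : Step) : Prop :=
  match s with
  | .recv t => t.Ground
  | .std l r =>
      (∀ u ∈ l, u.Ground) ∧ r.Ground ∧
        ((l = [] ∧ ∃ n, r = Term.nonce n) ∨
          ∃ p ∈ DS.rules, ∃ σ : Subst,
            l = p.1.map (Term.subst σ) ∧ r = p.2.subst σ)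

/-- A derivation: a sequence of deductions in which the left-hand side of every
standard step has already been deduced. -/
def IsDerivation (DS : DeductionSystem) (D : List Step) : Prop :=
  (∀ s ∈ D, IsDeduction DS s) ∧
  ∀ (i : ℕ) (l : List Term) (r : Term), D[i]? = some (Step.std l r) → ∀ u ∈ l, u ∈ RHSset D i

/-- The position of the first reception of `D` at index `≥ k` (or `|D|` if
there is none): (0-indexed version of) `Next(D, ·)`. -/
noncomputable def nextRecv (D : List Step) (k : ℕ) : ℕ :=
  sInf ({D.length} ∪ {j | k ≤ j ∧ ∃ t, D[j]? = some (Step.recv t)})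

/-- `Der DS K`: the set of ground terms derivable from the knowledge `K`. -/
def Der (DS : DeductionSystem) (K : Set Term) : Set Term :=
  {t | ∃ D : List Step, IsDerivation DS D ∧
        (∀ (j : ℕ) (u : Term), D[j]? = some (Step.recv u) → u ∈ K) ∧
        ∃ l, D.getLast? = some (Step.std l t)}

/-- No term is deduced twice in `D` by a standard rule. -/
def NoDuplicateStd (D : List Step) : Prop :=
  ∀ (i j : ℕ) (li lj : List Term) (r : Term), D[i]? = some (Step.std li r) → D[j]? = some (Step.std lj r) → i = j

/-- `(T,σ)`-maximality of a derivation. -/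
def MaximalDeriv (DS : DeductionSystem) (T : Set Term) (σ : Subst) (D : List Step) : Prop :=
  ∀ t ∈ subT T, ∀ k ≤ D.length,
    t.subst σ ∈ Der DS (RHSset D k) → t.subst σ ∈ RHSset D (nextRecv D k)

/-! ### Constraint systems -/

/-- A constraint: a reception `?t`, an emission `!t` or a negative
constraint `♮t`. -/
inductive Constraint
  | recv : Term → Constraint
  | send : Term → Constraint
  | neg : Term → Constraint

namespace Constraint

/-- The term of a constraint. -/
def term : Constraint → Term
  | recv t => t
  | send t => t
  | neg t => t

/-- The constraint is a send constraint. -/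
def isSend : Constraint → Bool
  | send _ => true
  | _ => false

/-- Apply a substitution to a constraint. -/
noncomputable def map (θ : Subst) : Constraint → Constraint
  | recv t => recv (t.subst θ)
  | send t => send (t.subst θ)
  | neg t => neg (t.subst θ)

end Constraint

/-- A (pre-)constraint system is a finite sequence of constraints. -/
abbrev CSystem := List Constraint

/-- The terms of a constraint system. -/
def csTerms (S : CSystem) : Set Term := {t | ∃ c ∈ S, c.term = t}

/-- `Sub(S)`. -/
def csSub (S : CSystem) : Set Term := subT (csTerms S)

/-- `vars(S)`. -/
def csVars (S : CSystem) : Set ℕ := varsT (csTerms S)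

/-- `|Sub(S)|`. -/
noncomputable def csSize (S : CSystem) : ℕ := sizeT (csTerms S)

/-- Apply a substitution to all constraints of a system. -/
noncomputable def csSubst (S : CSystem) (θ : Subst) : CSystem := S.map (Constraint.map θ)

/-- Origination and determination: `S` is a genuine constraint system. -/
def IsCS (S : CSystem) : Prop :=
  (∀ (i : ℕ) (t : Term), S[i]? = some (Constraint.send t) →
      t.varsSet ⊆ {x | ∃ j < i, ∃ u : Term, S[j]? = some (Constraint.recv u) ∧ x ∈ u.varsSet}) ∧
  (∀ (i : ℕ) (t : Term), S[i]? = some (Constraint.neg t) →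
      t.varsSet ⊆ {x | ∃ (j : ℕ) (u : Term), S[j]? = some (Constraint.recv u) ∧ x ∈ u.varsSet})

/-- The knowledge produced by the send constraints up to (and including) index
`i`, instantiated by `σ` (this is `{tⱼσ : j ≤ prev(i), S[j] = !tⱼ}`). -/
def knowledge (S : CSystem) (σ : Subst) (i : ℕ) : Set Term :=
  {u | ∃ j ≤ i, ∃ t, S[j]? = some (Constraint.send t) ∧ u = t.subst σ}

/-- A solution of a constraint system. -/
structure IsSolution (DS : DeductionSystem) (S : CSystem) (σ : Subst) : Prop where
  ground : σ.IsGround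
  idem : σ.Idem
  dom_eq : σ.dom = csVars S
  recv_mem : ∀ (i : ℕ) (t : Term), S[i]? = some (Constraint.recv t) → t.subst σ ∈ Der DS (knowledge S σ i)
  neg_not_mem : ∀ (i : ℕ) (t : Term), S[i]? = some (Constraint.neg t) → t.subst σ ∉ Der DS (knowledge S σ i)

/-- `prev(i)`: the last send index `≤ i` of `S`, if any. -/
def prevSend (S : CSystem) (i : ℕ) : Option ℕ :=
  ((List.range (i + 1)).filter (fun j => ((S[j]?).map Constraint.isSend).getD false)).max?

/-- `(S,σ)`-compliance of a derivation `D` with the mapping `α`: `α` is a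
strictly increasing bijection from the send indices of `S` onto the reception
positions of `D`, sending `!t` to the reception `? → tσ`. -/
structure Compliant (S : CSystem) (σ : Subst) (D : List Step) (α : ℕ → ℕ) : Prop where
  mono : ∀ (i j : ℕ) (ti tj : Term), S[i]? = some (Constraint.send ti) →
    S[j]? = some (Constraint.send tj) → i < j → α i < α j
  maps : ∀ (i : ℕ) (t : Term), S[i]? = some (Constraint.send t) →
    D[α i]? = some (Step.recv (t.subst σ))
  surj : ∀ (j : ℕ) (u : Term), D[j]? = some (Step.recv u) →
    ∃ i t, S[i]? = some (Constraint.send t) ∧ α i = j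

/-- Position in `D` of the first reception strictly after the reception
corresponding (via `α`) to the last send constraint `≤ i` of `S` (or the first
reception of `D` if there is no such send): this is `Next(D, α(prev(i)))`. -/
noncomputable def cutoff (S : CSystem) (D : List Step) (α : ℕ → ℕ) (i : ℕ) : ℕ :=
  match prevSend S i with
  | none => nextRecv D 0
  | some p => nextRecv D (α p + 1)

/-- `D, σ, α ⊢ S`: the derivation `D` is a proof of `σ ⊨ S`. -/
structure IsProof (DS : DeductionSystem) (S : CSystem) (σ : Subst)
    (D : List Step) (α : ℕ → ℕ) : Prop where
  deriv : IsDerivation DS D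
  compliant : Compliant S σ D α
  recv_proved : ∀ (i : ℕ) (t : Term), S[i]? = some (Constraint.recv t) →
    ∃ j < cutoff S D α i, ∃ s, D[j]? = some s ∧ s.rhs = t.subst σ
  neg_not_mem : ∀ (i : ℕ) (t : Term), S[i]? = some (Constraint.neg t) →
    t.subst σ ∉ Der DS (knowledge S σ i)

/-! ### Subterm deduction systems -/

/-- A composition rule: `x₁,…,xₙ → f(x₁,…,xₙ)` with pairwise distinct
variables `xᵢ`. -/
def IsCompRule (p : List Term × Term) : Prop :=
  ∃ (f : ℕ) (xs : List ℕ), xs.Nodup ∧ p.1 = xs.map Term.var ∧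
    p.2 = Term.func f (xs.map Term.var)

/-- A decomposition rule: the right-hand side is a subterm of a left-hand
side. -/
def IsDecompRule (p : List Term × Term) : Prop :=
  ∃ l ∈ p.1, p.2 ∈ l.sub

/-- A subterm deduction system: every standard rule is a composition or a
decomposition rule. -/
def SubtermSystem (DS : DeductionSystem) : Prop :=
  ∀ p ∈ DS.rules, IsCompRule p ∨ IsDecompRule p

/-- A step is a composition: a reception, a nonce creation, or an instance of
a composition rule of `DS`. -/
def IsCompositionStep (DS : DeductionSystem) (s : Step) : Prop :=
  match s with
  | .recv _ => True
  | .std l r =>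
      (l = [] ∧ ∃ n, r = Term.nonce n) ∨
        ∃ p ∈ DS.rules, IsCompRule p ∧
          ∃ σ : Subst, l = p.1.map (Term.subst σ) ∧ r = p.2.subst σ

/-- `l → r` is an instance (not necessarily ground) of a standard deduction
rule of the system. -/
def StdRuleInstance (DS : DeductionSystem) (l : List Term) (r : Term) : Prop :=
  (l = [] ∧ ∃ n, r = Term.nonce n) ∨
    ∃ p ∈ DS.rules, ∃ σ : Subst, l = p.1.map (Term.subst σ) ∧ r = p.2.subst σ

/-- DAG size of a rule. -/
noncomputable def ruleSize (p : List Term × Term) : ℕ :=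
  sizeT ({p.2} ∪ {u | u ∈ p.1})

/-- Maximal size of a decomposition rule of the system. -/
noncomputable def maxDecompSize (DS : DeductionSystem) : ℕ :=
  sSup {n | ∃ p ∈ DS.rules, IsDecompRule p ∧ ruleSize p = n}

/-! ### Localization -/

/-- `T` localizes the derivation `D` for `σ`. -/
def Localizes (DS : DeductionSystem) (T : Set Term) (σ : Subst) (D : List Step) : Prop :=
  ∀ (i : ℕ) (l : List Term) (r : Term), D[i]? = some (Step.std l r) →
    ∀ t ∈ subT T, ¬ t.IsVar → t.subst σ = r →
      ∃ ts : List Term, (∀ u ∈ ts, u ∈ subT T) ∧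
        (∀ u ∈ ts, u.subst σ ∈ RHSset D i) ∧ StdRuleInstance DS ts t

/-- `T` one-to-one localizes `D` for `σ`. -/
def OneToOneLocalizes (DS : DeductionSystem) (T : Set Term) (σ : Subst)
    (D : List Step) : Prop :=
  Localizes DS T σ D ∧ Set.InjOn (Term.subst σ) (subT T)

/-! ### Terms of a derivation, `Out(S)` -/

/-- The terms occurring in a derivation. -/
def derTerms (D : List Step) : Set Term := {t | ∃ s ∈ D, t ∈ s.terms}

/-- `Sub(D)`. -/
def subD (D : List Step) : Set Term := subT (derTerms D)

/-- The terms of the send constraints of `S`. -/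
def outTerms (S : CSystem) : Set Term := {t | Constraint.send t ∈ S}

/-! ### Milestone sequences -/

/-- An element of a milestone sequence: `→ t` or `? → t`. -/
inductive MStep
  | ded : Term → MStep
  | recvm : Term → MStep

/-- The term of a milestone element. -/
def MStep.term : MStep → Term
  | ded t => t
  | recvm t => t

/-- `M` is a milestone candidate sequence of `D` for `(T,σ)`. -/
def IsMilestoneOf (T : Set Term) (σ : Subst) (D : List Step) (M : List MStep) : Prop :=
  (∀ m ∈ M, m.term ∈ subT T) ∧
  ∃ α : ℕ → ℕ, (∀ i j, i < j → j < M.length → α i < α j) ∧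
    ∀ (i : ℕ) (m : MStep), M[i]? = some m →
      match m with
      | MStep.recvm t => D[α i]? = some (Step.recv (t.subst σ))
      | MStep.ded t => ∃ l, D[α i]? = some (Step.std l (t.subst σ))

/-- `M` is the `(T,σ)`-milestone sequence of `D`: a candidate of maximal
length. -/
def IsMilestoneSeq (T : Set Term) (σ : Subst) (D : List Step) (M : List MStep) : Prop :=
  IsMilestoneOf T σ D M ∧ ∀ M', IsMilestoneOf T σ D M' → M'.length ≤ M.length

/-! ### Free pairing symbol -/

/-- `f` occurs in the rule `p`. -/
def OccursInRule (f : ℕ) (p : List Term × Term) : Prop :=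
  (∃ t ∈ p.1, t.OccursFun f) ∨ p.2.OccursFun f

/-- The system contains a composition rule `x₁, x₂ → f(x₁,x₂)` where the
binary symbol `f` occurs in no other rule. -/
def FreePairing (DS : DeductionSystem) : Prop :=
  ∃ (f x₁ x₂ : ℕ), x₁ ≠ x₂ ∧
    ([Term.var x₁, Term.var x₂], Term.func f [Term.var x₁, Term.var x₂]) ∈ DS.rules ∧
    ∀ p ∈ DS.rules, OccursInRule f p →
      p = ([Term.var x₁, Term.var x₂], Term.func f [Term.var x₁, Term.var x₂])

/-! ### Unification -/

/-- `σ` is a unifier of the unification system `U`. -/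
def IsUnifier (U : Set (Term × Term)) (σ : Subst) : Prop :=
  ∀ pq ∈ U, Term.subst σ pq.1 = Term.subst σ pq.2

/-- `θ` is a most general unifier of `U`. -/
def IsMGU (U : Set (Term × Term)) (θ : Subst) : Prop :=
  IsUnifier U θ ∧ ∀ σ, IsUnifier U σ → ∃ τ : Subst, ∀ x, σ x = (θ x).subst τ

/-- The terms of a unification system. -/
def unifTerms (U : Set (Term × Term)) : Set Term :=
  {t | ∃ pq ∈ U, t = pq.1 ∨ t = pq.2}

/-- The variables of a unification system. -/
def unifVars (U : Set (Term × Term)) : Set ℕ := varsT (unifTerms U)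

/-
Build `D` while reading `S` from left to right: a send `!t` contributes the reception `? → tσ`,
a receive `?t` the standard steps of a derivation of `tσ` from the knowledge sent so far, and a
negative constraint nothing. The receptions of the derivation of `tσ` may be dropped because
`D` has already received all of them, and since no reception follows them, `tσ` is deduced
before `Next(D, α(prev(i)))`.
-/

theorem List.getElem?_concat_eq_some {α : Type*} {l : List α} {a b : α} {i : ℕ} :
    (l ++ [a])[i]? = some b ↔ l[i]? = some b ∨ (i = l.length ∧ a = b) := by
  rw [List.getElem?_append, List.getElem?_singleton]
  split_ifs with h₁ h₂
  · simp [h₁]; omega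
  · simp [List.getElem?_eq_none (Nat.le_of_not_lt h₁)]; omega
  · simp [List.getElem?_eq_none (Nat.le_of_not_lt h₁)]; omega

theorem List.getElem?_append_of_eq_some {α : Type*} {l l' : List α} {a : α} {i : ℕ}
    (h : l[i]? = some a) : (l ++ l')[i]? = some a := by
  rwa [List.getElem?_append_left (List.getElem?_eq_some_iff.mp h).1]

namespace Term

theorem exists_var_of_isSubterm_subst (σ : Subst) : ∀ (t : Term) (x : ℕ),
    IsSubterm (var x) (t.subst σ) → ∃ y ∈ t.varsSet, x ∈ (σ y).varsSet
  | var y, x, h => ⟨y, .refl _, by simp only [subst] at h; exact h⟩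
  | cst _, _, h => by simp only [subst] at h; cases h
  | nonce _, _, h => by simp only [subst] at h; cases h
  | func _ args, x, h => by
    simp only [subst] at h
    cases h with
    | func hmem hsub =>
      obtain ⟨a, -, rfl⟩ := List.mem_map.mp hmem
      have := List.sizeOf_lt_of_mem a.2
      obtain ⟨y, hy, hxy⟩ := exists_var_of_isSubterm_subst σ a.1 x hsub
      exact ⟨y, .func a.2 hy, hxy⟩
termination_by t => sizeOf t
decreasing_by simp only [func.sizeOf_spec]; omega

theorem ground_subst {σ : Subst} (hσ : σ.IsGround) {t : Term} (ht : t.varsSet ⊆ σ.dom) :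
    (t.subst σ).Ground :=
  Set.eq_empty_of_forall_notMem fun x hx =>
    have ⟨y, hy, hxy⟩ := exists_var_of_isSubterm_subst σ t x hx
    (Set.eq_empty_iff_forall_notMem.mp (hσ y (ht hy))) x hxy

end Term

theorem varsSet_subset_csVars {S : CSystem} {c : Constraint} (hc : c ∈ S) :
    c.term.varsSet ⊆ csVars S :=
  fun _ hx => ⟨c.term, ⟨c, hc, rfl⟩, hx⟩

theorem RHSset_mono (D : List Step) {k k' : ℕ} (h : k ≤ k') : RHSset D k ⊆ RHSset D k' :=
  fun _ ⟨j, hj, s, hs, hrhs⟩ => ⟨j, hj.trans_le h, s, hs, hrhs⟩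

theorem RHSset_append (D E : List Step) {k : ℕ} (h : k ≤ D.length) :
    RHSset (D ++ E) k = RHSset D k := by
  ext r
  constructor <;> rintro ⟨j, hj, s, hs, hrhs⟩ <;> refine ⟨j, hj, s, ?_, hrhs⟩
  · rwa [List.getElem?_append_left (hj.trans_le h)] at hs
  · exact List.getElem?_append_of_eq_some hs

theorem mem_RHSset_length {D : List Step} {r : Term} :
    r ∈ RHSset D D.length ↔ ∃ s ∈ D, s.rhs = r := by
  constructor
  · rintro ⟨j, -, s, hs, hrhs⟩
    exact ⟨s, List.mem_of_getElem? hs, hrhs⟩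
  · rintro ⟨s, hs, hrhs⟩
    obtain ⟨j, hj⟩ := List.mem_iff_getElem?.mp hs
    exact ⟨j, (List.getElem?_eq_some_iff.mp hj).1, s, hj, hrhs⟩

theorem isDerivation_concat_iff {DS : DeductionSystem} {D : List Step} {s : Step} :
    IsDerivation DS (D ++ [s]) ↔ IsDerivation DS D ∧ IsDeduction DS s ∧
      ∀ l r, s = .std l r → ∀ u ∈ l, u ∈ RHSset D D.length := by
  simp only [IsDerivation, List.mem_append, List.mem_singleton, List.getElem?_concat_eq_some]
  constructor
  · rintro ⟨hded, hlhs⟩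
    refine ⟨⟨fun s' hs' => hded s' (.inl hs'), fun i l r hi u hu => ?_⟩, hded s (.inr rfl),
      fun l r hs u hu => ?_⟩
    · have hi' := (List.getElem?_eq_some_iff.mp hi).1
      rw [← RHSset_append D [s] hi'.le]
      exact hlhs i l r (.inl hi) u hu
    · rw [← RHSset_append D [s] le_rfl]
      exact hlhs _ l r (.inr ⟨rfl, hs⟩) u hu
  · rintro ⟨⟨hded, hlhs⟩, hs, hlast⟩
    refine ⟨fun s' hs' => hs'.elim (hded s') (· ▸ hs), ?_⟩
    rintro i l r (hi | ⟨rfl, rfl⟩) u hu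
    · have hi' := (List.getElem?_eq_some_iff.mp hi).1
      rw [RHSset_append D [_] hi'.le]
      exact hlhs i l r hi u hu
    · rw [RHSset_append D _ le_rfl]
      exact hlast l r rfl u hu

def Step.isStd : Step → Bool
  | .recv _ => false
  | .std _ _ => true

def stdOnly (D : List Step) : List Step := D.filter Step.isStd

theorem recv_notMem_stdOnly (D : List Step) (u : Term) : Step.recv u ∉ stdOnly D := by
  simp [stdOnly, Step.isStd]

theorem rhs_mem_RHSset_append_stdOnly {D W : List Step}
    (hW : ∀ u, Step.recv u ∈ W → u ∈ RHSset D D.length) {s : Step} (hs : s ∈ W) :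
    s.rhs ∈ RHSset (D ++ stdOnly W) (D ++ stdOnly W).length := by
  rw [mem_RHSset_length]
  cases s with
  | recv u =>
    obtain ⟨s', hs', hrhs⟩ := mem_RHSset_length.mp (hW u hs)
    exact ⟨s', List.mem_append_left _ hs', hrhs⟩
  | std l r => exact ⟨_, List.mem_append_right _ (List.mem_filter.mpr ⟨hs, rfl⟩), rfl⟩

theorem IsDerivation.append_stdOnly {DS : DeductionSystem} {D : List Step}
    (hD : IsDerivation DS D) {W : List Step} (hW : IsDerivation DS W)
    (hrecv : ∀ u, Step.recv u ∈ W → u ∈ RHSset D D.length) :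
    IsDerivation DS (D ++ stdOnly W) := by
  induction W using List.reverseRecOn with
  | nil => simpa [stdOnly] using hD
  | append_singleton W s ih =>
    obtain ⟨hW', hs, hlhs⟩ := isDerivation_concat_iff.mp hW
    have hrecv' : ∀ u, Step.recv u ∈ W → u ∈ RHSset D D.length :=
      fun u hu => hrecv u (List.mem_append_left _ hu)
    cases s with
    | recv u => simpa [stdOnly, Step.isStd] using ih hW' hrecv'
    | std l r =>
      have hstd : stdOnly (W ++ [.std l r]) = stdOnly W ++ [.std l r] := by
        simp [stdOnly, Step.isStd]
      rw [hstd, ← List.append_assoc, isDerivation_concat_iff]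
      refine ⟨ih hW' hrecv', hs, ?_⟩
      rintro l r ⟨rfl, rfl⟩ u hu
      obtain ⟨s', hs', rfl⟩ := mem_RHSset_length.mp (hlhs l r rfl u hu)
      exact rhs_mem_RHSset_append_stdOnly hrecv' hs'

theorem le_nextRecv_iff {D : List Step} {k m : ℕ} :
    m ≤ nextRecv D k ↔
      m ≤ D.length ∧ ∀ j t, k ≤ j → D[j]? = some (.recv t) → m ≤ j := by
  rw [nextRecv, le_csInf_iff (OrderBot.bddBelow _) ⟨_, .inl rfl⟩]
  simp only [Set.mem_union, Set.mem_singleton_iff, Set.mem_ofPred_eq]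
  constructor
  · intro h
    exact ⟨h _ (.inl rfl), fun j t hkj hj => h j (.inr ⟨hkj, t, hj⟩)⟩
  · rintro ⟨hlen, h⟩ j (rfl | ⟨hkj, t, hj⟩)
    exacts [hlen, h j t hkj hj]

theorem nextRecv_le_length (D : List Step) (k : ℕ) : nextRecv D k ≤ D.length :=
  (le_nextRecv_iff.mp le_rfl).1

theorem nextRecv_eq_length {D : List Step} {k : ℕ}
    (h : ∀ j t, k ≤ j → D[j]? ≠ some (.recv t)) : nextRecv D k = D.length :=
  (nextRecv_le_length D k).antisymm
    (le_nextRecv_iff.mpr ⟨le_rfl, fun j t hkj hj => absurd hj (h j t hkj)⟩)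

theorem nextRecv_le_nextRecv_append (D E : List Step) (k : ℕ) :
    nextRecv D k ≤ nextRecv (D ++ E) k := by
  obtain ⟨hlen, h⟩ := le_nextRecv_iff.mp (le_refl (nextRecv D k))
  refine le_nextRecv_iff.mpr ⟨hlen.trans (by simp), fun j t hkj hj => ?_⟩
  by_contra! hjD
  rw [List.getElem?_append_left (hjD.trans_le hlen)] at hj
  exact hjD.not_ge (h j t hkj hj)

theorem isSend_getD_iff {S : CSystem} {j : ℕ} :
    ((S[j]?).map Constraint.isSend).getD false = true ↔ ∃ t, S[j]? = some (.send t) := by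
  rcases S[j]? with _ | (_ | _ | _) <;> simp [Constraint.isSend]

theorem prevSend_eq_some_iff {S : CSystem} {i p : ℕ} :
    prevSend S i = some p ↔ p ≤ i ∧ (∃ t, S[p]? = some (.send t)) ∧
      ∀ j t, j ≤ i → S[j]? = some (.send t) → j ≤ p := by
  simp only [prevSend, List.max?_eq_some_iff, List.mem_filter, List.mem_range, isSend_getD_iff,
    Nat.lt_succ_iff]
  constructor
  · rintro ⟨⟨hpi, hp⟩, hmax⟩
    exact ⟨hpi, hp, fun j t hji hj => hmax j ⟨hji, t, hj⟩⟩
  · rintro ⟨hpi, hp, hmax⟩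
    exact ⟨⟨hpi, hp⟩, fun j ⟨hji, t, hj⟩ => hmax j t hji hj⟩

theorem prevSend_eq_none_iff {S : CSystem} {i : ℕ} :
    prevSend S i = none ↔ ∀ j t, j ≤ i → S[j]? ≠ some (.send t) := by
  simp only [prevSend, List.max?_eq_none_iff, List.filter_eq_nil_iff, List.mem_range,
    isSend_getD_iff, Nat.lt_succ_iff]
  grind

theorem prevSend_append {S : CSystem} (T : CSystem) {i : ℕ} (hi : i < S.length) :
    prevSend (S ++ T) i = prevSend S i := by
  simp only [prevSend]
  congr 1
  refine List.filter_congr fun j hj => ?_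
  rw [List.getElem?_append_left (by grind)]

theorem knowledge_append {S : CSystem} (T : CSystem) (σ : Subst) {i : ℕ} (hi : i < S.length) :
    knowledge (S ++ T) σ i = knowledge S σ i := by
  ext u
  simp only [knowledge, Set.mem_ofPred_eq]
  refine exists_congr fun j => and_congr_right fun hji => ?_
  rw [List.getElem?_append_left (by omega)]

theorem getElem?_concat_eq_send {S : CSystem} {c : Constraint} (hc : c.isSend = false) {i : ℕ}
    {t : Term} (h : (S ++ [c])[i]? = some (.send t)) : S[i]? = some (.send t) := by
  rcases List.getElem?_concat_eq_some.mp h with h | ⟨-, rfl⟩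
  exacts [h, absurd hc (by simp [Constraint.isSend])]

namespace Compliant

variable {S : CSystem} {σ : Subst} {D : List Step} {α : ℕ → ℕ}

theorem lt_length (h : Compliant S σ D α) {i : ℕ} {t : Term}
    (hi : S[i]? = some (.send t)) : α i < D.length :=
  (List.getElem?_eq_some_iff.mp (h.maps i t hi)).1

theorem knowledge_subset (h : Compliant S σ D α) (i : ℕ) :
    knowledge S σ i ⊆ RHSset D D.length := by
  rintro _ ⟨j, -, t, hj, rfl⟩
  exact ⟨α j, h.lt_length hj, _, h.maps j t hj, rfl⟩

theorem append_of_not_send (h : Compliant S σ D α) {c : Constraint} (hc : c.isSend = false)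
    {E : List Step} (hE : ∀ u, Step.recv u ∉ E) : Compliant (S ++ [c]) σ (D ++ E) α where
  mono i j ti tj hi hj := h.mono i j ti tj (getElem?_concat_eq_send hc hi)
    (getElem?_concat_eq_send hc hj)
  maps i t hi := List.getElem?_append_of_eq_some (h.maps i t (getElem?_concat_eq_send hc hi))
  surj j u hj := by
    have hjD : j < D.length := by
      by_contra! hjD
      rw [List.getElem?_append_right hjD] at hj
      exact hE u (List.mem_of_getElem? hj)
    rw [List.getElem?_append_left hjD] at hj
    obtain ⟨i, t, hi, hαi⟩ := h.surj j u hj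
    exact ⟨i, t, List.getElem?_append_of_eq_some hi, hαi⟩

theorem concat_send (h : Compliant S σ D α) (t : Term) :
    Compliant (S ++ [.send t]) σ (D ++ [.recv (t.subst σ)])
      (Function.update α S.length D.length) where
  mono i j ti tj hi hj hij := by
    have hiS : i < S.length := by grind
    rw [Function.update_of_ne hiS.ne]
    rcases List.getElem?_concat_eq_some.mp hj with hj | ⟨rfl, -⟩
    · rw [Function.update_of_ne (List.getElem?_eq_some_iff.mp hj).1.ne]
      exact h.mono i j ti tj
        (List.getElem?_concat_eq_some.mp hi |>.resolve_right (by omega)) hj hij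
    · rw [Function.update_self]
      exact h.lt_length (List.getElem?_concat_eq_some.mp hi |>.resolve_right (by omega))
  maps i t' hi := by
    rcases List.getElem?_concat_eq_some.mp hi with hi | ⟨rfl, ht⟩
    · rw [Function.update_of_ne (List.getElem?_eq_some_iff.mp hi).1.ne]
      exact List.getElem?_append_of_eq_some (h.maps i t' hi)
    · cases ht
      simp
  surj j u hj := by
    rcases List.getElem?_concat_eq_some.mp hj with hj | ⟨rfl, -⟩
    · obtain ⟨i, t', hi, rfl⟩ := h.surj j u hj
      refine ⟨i, t', List.getElem?_append_of_eq_some hi, ?_⟩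
      rw [Function.update_of_ne (List.getElem?_eq_some_iff.mp hi).1.ne]
    · exact ⟨S.length, t, List.getElem?_concat_length, Function.update_self ..⟩

/-- Every reception of `D` comes from a send at most `prev(i)`. -/
theorem cutoff_eq_length (h : Compliant S σ D α) {i : ℕ}
    (hi : ∀ j t, S[j]? = some (.send t) → j ≤ i) : cutoff S D α i = D.length := by
  unfold cutoff
  split
  next hp =>
    refine nextRecv_eq_length fun j u _ hj => ?_
    obtain ⟨i', t, hi', -⟩ := h.surj j u hj
    exact prevSend_eq_none_iff.mp hp i' t (hi i' t hi') hi'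
  next p hp =>
    obtain ⟨-, ⟨tp, hpS⟩, hmax⟩ := prevSend_eq_some_iff.mp hp
    refine nextRecv_eq_length fun j u hpj hj => ?_
    obtain ⟨i', t, hi', rfl⟩ := h.surj j u hj
    rcases (hmax i' t (hi i' t hi') hi').lt_or_eq with hlt | rfl
    · exact absurd (h.mono i' p t tp hi' hpS hlt) (by omega)
    · omega

end Compliant

theorem cutoff_le_length (S : CSystem) (D : List Step) (α : ℕ → ℕ) (i : ℕ) :
    cutoff S D α i ≤ D.length := by
  unfold cutoff
  split <;> exact nextRecv_le_length _ _

theorem cutoff_le_cutoff_append {S : CSystem} {i : ℕ} (hi : i < S.length) (c : Constraint)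
    (D E : List Step) {α α' : ℕ → ℕ} (hα : ∀ p < S.length, α' p = α p) :
    cutoff S D α i ≤ cutoff (S ++ [c]) (D ++ E) α' i := by
  unfold cutoff
  rw [prevSend_append _ hi]
  split
  · exact nextRecv_le_nextRecv_append D E 0
  next p hp =>
    rw [hα p ((prevSend_eq_some_iff.mp hp).1.trans_lt hi)]
    exact nextRecv_le_nextRecv_append D E _

/-- `IsProof` without the negative constraints, which a derivation cannot influence. -/
structure ProvesReceives (DS : DeductionSystem) (S : CSystem) (σ : Subst) (D : List Step)
    (α : ℕ → ℕ) : Prop where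
  deriv : IsDerivation DS D
  compliant : Compliant S σ D α
  recv_proved : ∀ (i : ℕ) (t : Term), S[i]? = some (.recv t) →
    t.subst σ ∈ RHSset D (cutoff S D α i)

namespace ProvesReceives

variable {DS : DeductionSystem} {S : CSystem} {σ : Subst} {D : List Step} {α : ℕ → ℕ}

theorem append (h : ProvesReceives DS S σ D α) {c : Constraint} {E : List Step}
    {α' : ℕ → ℕ}
    (hD : IsDerivation DS (D ++ E)) (hc : Compliant (S ++ [c]) σ (D ++ E) α')
    (hα : ∀ p < S.length, α' p = α p)
    (hlast : ∀ t, c = .recv t →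
      t.subst σ ∈ RHSset (D ++ E) (cutoff (S ++ [c]) (D ++ E) α' S.length)) :
    ProvesReceives DS (S ++ [c]) σ (D ++ E) α' where
  deriv := hD
  compliant := hc
  recv_proved i t hi := by
    rcases List.getElem?_concat_eq_some.mp hi with hi | ⟨rfl, rfl⟩
    · have hiS := (List.getElem?_eq_some_iff.mp hi).1
      refine RHSset_mono _ (cutoff_le_cutoff_append hiS c D E hα) ?_
      rw [RHSset_append D E (cutoff_le_length S D α i)]
      exact h.recv_proved i t hi
    · exact hlast t rfl

theorem concat_neg (h : ProvesReceives DS S σ D α) (t : Term) :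
    ProvesReceives DS (S ++ [.neg t]) σ D α := by
  simpa using h.append (E := []) (by simpa using h.deriv)
    (h.compliant.append_of_not_send rfl (by simp)) (fun _ _ => rfl) (by simp)

theorem concat_send (h : ProvesReceives DS S σ D α) {t : Term} (ht : (t.subst σ).Ground) :
    ProvesReceives DS (S ++ [.send t]) σ (D ++ [.recv (t.subst σ)])
      (Function.update α S.length D.length) :=
  h.append (isDerivation_concat_iff.mpr ⟨h.deriv, ht, by simp⟩) (h.compliant.concat_send t)
    (fun _ hp => Function.update_of_ne hp.ne ..) (by simp)

theorem concat_recv (h : ProvesReceives DS S σ D α) {t : Term}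
    (ht : t.subst σ ∈ Der DS (knowledge (S ++ [.recv t]) σ S.length)) :
    ∃ D', ProvesReceives DS (S ++ [.recv t]) σ D' α := by
  obtain ⟨W, hW, hWrecv, l, hWlast⟩ := ht
  have hK : knowledge (S ++ [.recv t]) σ S.length ⊆ RHSset D D.length := by
    have hc₀ := h.compliant.append_of_not_send (c := .recv t) rfl (E := []) (by simp)
    simpa using hc₀.knowledge_subset S.length
  have hWK : ∀ u, Step.recv u ∈ W → u ∈ RHSset D D.length := fun u hu =>
    have ⟨j, hj⟩ := List.mem_iff_getElem?.mp hu
    hK (hWrecv j u hj)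
  have hc := h.compliant.append_of_not_send (c := .recv t) rfl (recv_notMem_stdOnly W)
  refine ⟨_, h.append (h.deriv.append_stdOnly hW hWK) hc (fun _ _ => rfl) ?_⟩
  rintro _ ⟨⟩
  rw [hc.cutoff_eq_length fun j _ hj => by grind]
  exact rhs_mem_RHSset_append_stdOnly hWK (List.mem_of_getLast? hWlast)

end ProvesReceives

theorem exists_provesReceives (DS : DeductionSystem) (σ : Subst) (S : CSystem)
    (hsend : ∀ (i : ℕ) (t : Term), S[i]? = some (.send t) → (t.subst σ).Ground)
    (hrecv : ∀ (i : ℕ) (t : Term), S[i]? = some (.recv t) →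
      t.subst σ ∈ Der DS (knowledge S σ i)) :
    ∃ (D : List Step) (α : ℕ → ℕ), ProvesReceives DS S σ D α := by
  induction S using List.reverseRecOn with
  | nil =>
    exact ⟨[], id, ⟨⟨by simp, by simp⟩, ⟨by simp, by simp, by simp⟩, by simp⟩⟩
  | append_singleton S c ih =>
    have hlast : (S ++ [c])[S.length]? = some c := List.getElem?_concat_length
    obtain ⟨D, α, h⟩ := ih (fun i t hi => hsend i t (List.getElem?_append_of_eq_some hi))
      fun i t hi => by
        rw [← knowledge_append [c] σ (List.getElem?_eq_some_iff.mp hi).1]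
        exact hrecv i t (List.getElem?_append_of_eq_some hi)
    cases c with
    | recv t =>
      obtain ⟨D', h'⟩ := h.concat_recv (hrecv _ t hlast)
      exact ⟨D', α, h'⟩
    | send t => exact ⟨_, _, h.concat_send (hsend _ t hlast)⟩
    | neg t => exact ⟨D, α, h.concat_neg t⟩

theorem solution_has_proof_general (DS : DeductionSystem) (S : CSystem)
    (σ : Subst) (hsol : IsSolution DS S σ) :
    ∃ (D : List Step) (α : ℕ → ℕ), IsProof DS S σ D α := by
  have hsend (i : ℕ) (t : Term) (hi : S[i]? = some (.send t)) : (t.subst σ).Ground :=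
    Term.ground_subst hsol.ground
      (hsol.dom_eq ▸ varsSet_subset_csVars (List.mem_of_getElem? hi))
  obtain ⟨D, α, h⟩ := exists_provesReceives DS σ S hsend hsol.recv_mem
  exact ⟨D, α, h.deriv, h.compliant, h.recv_proved, hsol.neg_not_mem⟩

/-- Every solution of a constraint system has a proof. -/
theorem solution_has_proof (DS : DeductionSystem) (S : CSystem) (hS : IsCS S)
    (σ : Subst) (hsol : IsSolution DS S σ) :
    ∃ (D : List Step) (α : ℕ → ℕ), IsProof DS S σ D α :=
  solution_has_proof_general DS S σ hsol
end

section
/- Let the fixed deduction system be a subterm deduction system and S a constraint system. Let σ be a ground substitution with σ ⊨ S, and let D be a proof of σ ⊨ S in which no term is deduced twice by a standard rule. If s is a term with s ∈ Sub(D) (s is a subterm of some term occurring in D) and s ∉ (Sub(Out(S))∖X)σ, then there exists an index i of D such that D[i] = l → s is a composition rule and s ∉ Sub(RHS(D,i−1)). -/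
/-! Let `i` be the first step of `D` in which `s` occurs. The premises of a standard
step have been deduced earlier, so `s` can only be new in the conclusion; in a subterm
system a decomposition conclusion lies inside a premise, so step `i` is a composition
whose conclusion is `s` itself. If step `i` is the reception of some `tσ` with `!t`
in `S`, then `s` is not of the form `t'σ` for a non-variable `t' ⊑ t`, so `s ⊑ σ x`
for a variable `x` of `t`. By origination `x` occurs in an earlier receive constraint
`?v`, and `vσ` is deduced before the reception, so `s` would already occur there. -/

namespace Term

theorem subst_var (σ : Subst) (x : ℕ) : (var x).subst σ = σ x := by rw [subst]

theorem subst_func (σ : Subst) (f : ℕ) (args : List Term) :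
    (func f args).subst σ = func f (args.map (subst σ)) := by
  rw [subst]
  simp

namespace IsSubterm

theorem trans {a b c : Term} (hab : a.IsSubterm b) (hbc : b.IsSubterm c) : a.IsSubterm c := by
  induction hbc with
  | refl => exact hab
  | func hmem _ ih => exact .func hmem ih

protected theorem subst {s t : Term} (σ : Subst) (h : s.IsSubterm t) :
    (s.subst σ).IsSubterm (t.subst σ) := by
  induction h with
  | refl => exact .refl _
  | func hmem _ ih =>
    rw [subst_func]
    exact .func (List.mem_map_of_mem hmem) ih

theorem eq_or_of_func {s : Term} {f : ℕ} {args : List Term}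
    (h : s.IsSubterm (Term.func f args)) : s = Term.func f args ∨ ∃ a ∈ args, s.IsSubterm a := by
  cases h with
  | refl => exact .inl rfl
  | func hmem hsub => exact .inr ⟨_, hmem, hsub⟩

theorem exists_of_subst {s t : Term} {σ : Subst} (h : s.IsSubterm (t.subst σ)) :
    (∃ t' : Term, t'.IsSubterm t ∧ ¬ t'.IsVar ∧ t'.subst σ = s) ∨
      ∃ x, (var x).IsSubterm t ∧ s.IsSubterm (σ x) := by
  generalize hw : t.subst σ = w at h
  induction h generalizing t with
  | refl =>
    cases t with
    | var x => exact .inr ⟨x, .refl _, by rw [← hw, subst_var]; exact .refl _⟩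
    | cst _ | nonce _ | func _ _ => exact .inl ⟨_, .refl _, id, hw⟩
  | func hmem hsub ih =>
    cases t with
    | var x => exact .inr ⟨x, .refl _, by rw [subst_var] at hw; exact hw ▸ .func hmem hsub⟩
    | cst _ => rw [subst] at hw; cases hw
    | nonce _ => rw [subst] at hw; cases hw
    | func g bs =>
      rw [subst_func] at hw
      obtain ⟨-, rfl⟩ := Term.func.inj hw
      obtain ⟨b, hb, rfl⟩ := List.mem_map.mp hmem
      rcases ih rfl with ⟨t', ht', hnv, hs⟩ | ⟨x, hx, hsx⟩
      · exact .inl ⟨t', .func hb ht', hnv, hs⟩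
      · exact .inr ⟨x, .func hb hx, hsx⟩

theorem mem_subT {s u : Term} {T : Set Term} (h : s.IsSubterm u) (hu : u ∈ subT T) :
    s ∈ subT T :=
  let ⟨t, ht, hut⟩ := hu
  ⟨t, ht, h.trans hut⟩

end IsSubterm

end Term

theorem Step.rhs_mem_terms (st : Step) : st.rhs ∈ st.terms := by
  cases st <;> simp [Step.rhs, Step.terms]

theorem exists_first_step_of_mem_subD {D : List Step} {s : Term} (hs : s ∈ subD D) :
    ∃ (i : ℕ) (st : Step), D[i]? = some st ∧ s ∈ subT st.terms ∧ s ∉ subT (RHSset D i) := by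
  classical
  have hex : ∃ (i : ℕ) (st : Step), D[i]? = some st ∧ s ∈ subT st.terms := by
    obtain ⟨t, ⟨st, hst, ht⟩, hst'⟩ := hs
    obtain ⟨i, hi⟩ := List.mem_iff_getElem?.mp hst
    exact ⟨i, st, hi, t, ht, hst'⟩
  obtain ⟨st, hDi, hsi⟩ := Nat.find_spec hex
  refine ⟨_, st, hDi, hsi, ?_⟩
  rintro ⟨u, ⟨j, hj, st', hDj, rfl⟩, hsu⟩
  exact Nat.find_min hex hj ⟨st', hDj, _, st'.rhs_mem_terms, hsu⟩

theorem IsDeduction.isCompositionStep_of_new_subterm {DS : DeductionSystem}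
    (hsub : SubtermSystem DS) {l : List Term} {r s : Term} (hded : IsDeduction DS (.std l r))
    (hsr : s.IsSubterm r) (hl : ∀ u ∈ l, ¬ s.IsSubterm u) :
    s = r ∧ IsCompositionStep DS (.std l r) := by
  obtain ⟨-, -, ⟨hl0, n, rfl⟩ | ⟨p, hp, τ, rfl, rfl⟩⟩ := hded
  · cases hsr
    exact ⟨rfl, .inl ⟨hl0, n, rfl⟩⟩
  rcases hsub p hp with hcomp | ⟨l0, hl0, hrl0⟩
  · obtain ⟨f, xs, -, h1, h2⟩ := id hcomp
    have hr : p.2.subst τ = .func f (p.1.map (Term.subst τ)) := by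
      rw [h2, Term.subst_func, h1]
    rw [hr] at hsr ⊢
    rcases hsr.eq_or_of_func with rfl | ⟨a, ha, hsa⟩
    · exact ⟨rfl, .inr ⟨p, hp, hcomp, τ, rfl, hr.symm⟩⟩
    · exact absurd hsa (hl a ha)
  · exact absurd (hsr.trans (hrl0.subst τ)) (hl _ (List.mem_map_of_mem hl0))

theorem nextRecv_le {D : List Step} {k i : ℕ} {u : Term} (hki : k ≤ i)
    (hDi : D[i]? = some (.recv u)) : nextRecv D k ≤ i :=
  Nat.sInf_le (.inr ⟨hki, u, hDi⟩)

theorem prevSend_spec {S : CSystem} {j p : ℕ} (h : prevSend S j = some p) :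
    p ≤ j ∧ ∃ t, S[p]? = some (.send t) := by
  obtain ⟨hpj, hsend⟩ := List.mem_filter.mp (List.max?_mem h)
  refine ⟨Nat.lt_succ_iff.mp (List.mem_range.mp hpj), ?_⟩
  rcases hSp : S[p]? with _ | ⟨t | t | t⟩ <;> simp_all [Constraint.isSend]

theorem Compliant.cutoff_le {S : CSystem} {σ : Subst} {D : List Step} {α : ℕ → ℕ}
    (hc : Compliant S σ D α) {j k : ℕ} {t : Term} (hk : S[k]? = some (.send t)) (hjk : j < k) :
    cutoff S D α j ≤ α k := by
  unfold cutoff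
  split
  · exact nextRecv_le (Nat.zero_le _) (hc.maps k t hk)
  · next p hp =>
    obtain ⟨hpj, tp, hSp⟩ := prevSend_spec hp
    exact nextRecv_le (hc.mono p k tp t hSp hk (hpj.trans_lt hjk)) (hc.maps k t hk)

section IsProof

variable {DS : DeductionSystem} {S : CSystem} {σ : Subst} {D : List Step} {α : ℕ → ℕ}

theorem IsProof.subst_var_mem_subT_RHSset (hproof : IsProof DS S σ D α) (hS : IsCS S)
    {k x : ℕ} {t : Term} (hk : S[k]? = some (.send t)) (hx : x ∈ t.varsSet) :
    σ x ∈ subT (RHSset D (α k)) := by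
  obtain ⟨j, hjk, v, hSj, hxv⟩ := hS.1 k t hk hx
  obtain ⟨m, hm, st, hDm, hrhs⟩ := hproof.recv_proved j v hSj
  refine ⟨v.subst σ, ⟨m, hm.trans_le (hproof.compliant.cutoff_le hk hjk), st, hDm, hrhs⟩, ?_⟩
  simpa only [Term.subst_var] using hxv.subst σ

theorem IsProof.mem_subst_image_of_new_subterm_recv (hproof : IsProof DS S σ D α)
    (hS : IsCS S) {i : ℕ} {s u : Term} (hDi : D[i]? = some (.recv u)) (hsu : s.IsSubterm u)
    (hnew : s ∉ subT (RHSset D i)) :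
    s ∈ Term.subst σ '' (subT (outTerms S) \ {t : Term | t.IsVar}) := by
  obtain ⟨k, t, hSk, rfl⟩ := hproof.compliant.surj i u hDi
  have hu : u = t.subst σ := by
    simpa [hDi] using hproof.compliant.maps k t hSk
  subst hu
  rcases hsu.exists_of_subst with ⟨t', ht', hnv, rfl⟩ | ⟨x, hx, hsx⟩
  · exact ⟨t', ⟨⟨t, List.mem_of_getElem? hSk, ht'⟩, hnv⟩, rfl⟩
  · exact absurd (hsx.mem_subT (hproof.subst_var_mem_subT_RHSset hS hSk hx)) hnew

end IsProof

theorem subterm_created_by_composition_general (DS : DeductionSystem) (hsub : SubtermSystem DS)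
    (S : CSystem) (hS : IsCS S) (σ : Subst)
    (D : List Step) (α : ℕ → ℕ) (hproof : IsProof DS S σ D α)
    (s : Term) (hs : s ∈ subD D)
    (hout : s ∉ (Term.subst σ) '' (subT (outTerms S) \ {t : Term | t.IsVar})) :
    ∃ (i : ℕ) (st : Step), D[i]? = some st ∧ st.rhs = s ∧
      IsCompositionStep DS st ∧ s ∉ subT (RHSset D i) := by
  obtain ⟨i, st, hDi, ⟨u, hu, hsu⟩, hnew⟩ := exists_first_step_of_mem_subD hs
  cases st with
  | recv v =>
    rcases hu
    exact absurd (hproof.mem_subst_image_of_new_subterm_recv hS hDi hsu hnew) hout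
  | std l r =>
    have hl : ∀ v ∈ l, ¬ s.IsSubterm v := fun v hv hsv =>
      hnew ⟨v, hproof.deriv.2 i l r hDi v hv, hsv⟩
    have hsr : s.IsSubterm r := by
      rcases hu with rfl | hv
      · exact hsu
      · exact absurd hsu (hl u hv)
    have hded := hproof.deriv.1 _ (List.mem_of_getElem? hDi)
    obtain ⟨rfl, hcomp⟩ := hded.isCompositionStep_of_new_subterm hsub hsr hl
    exact ⟨i, _, hDi, rfl, hcomp, hnew⟩

/-- Lemma 3: in a subterm deduction system, every subterm of a proof of
`σ ⊨ S` that is not the instance of a non-variable subterm of `Out(S)` is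
deduced by a composition rule and does not appear earlier. -/
theorem subterm_created_by_composition (DS : DeductionSystem) (hsub : SubtermSystem DS)
    (S : CSystem) (hS : IsCS S) (σ : Subst) (hsol : IsSolution DS S σ)
    (D : List Step) (α : ℕ → ℕ) (hproof : IsProof DS S σ D α)
    (hnd : NoDuplicateStd D)
    (s : Term) (hs : s ∈ subD D)
    (hout : s ∉ (Term.subst σ) '' (subT (outTerms S) \ {t : Term | t.IsVar})) :
    ∃ (i : ℕ) (st : Step), D[i]? = some st ∧ st.rhs = s ∧
      IsCompositionStep DS st ∧ s ∉ subT (RHSset D i) :=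
  subterm_created_by_composition_general DS hsub S hS σ D α hproof s hs hout
end
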